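/- In the hard-core model on a path with interference range β, at most one of the first β+1 nodes is active in any feasible state; consequently the normalizing constant satisfies the decomposition Z_{1:n} = Z_{β+2:n} + ∑_{i=1}^{β+1} ν_i Z_{i+β+1:n}, where Z_{a:b} denotes the normalizing constant of the sub-network consisting of nodes a,...,b only (with Z_{a:b} = 1 if a > b). -/
import Mathlib


open scoped Classical
open Finset

/-- Normalizing constant of the hard-core model on the segment of (1-based) nodes
`a,…,b` of a line network with interference range `β` (nodes `i ≠ j` interfere iff
`|i − j| ≤ β`), states being independent subsets `S ⊆ {a,…,b}`. -/
noncomputable def Zseg (β : ℕ) (ν : ℕ → ℝ) (a b : ℕ) : ℝ :=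
  ∑ S ∈ (Finset.Icc a b).powerset.filter
      (fun S => ∀ i ∈ S, ∀ j ∈ S, i ≠ j → ¬(i ≤ j + β ∧ j ≤ i + β)),
    ∏ i ∈ S, ν i

abbrev hcIndep (β : ℕ) (S : Finset ℕ) : Prop :=
  ∀ i ∈ S, ∀ j ∈ S, i ≠ j → ¬(i ≤ j + β ∧ j ≤ i + β)

noncomputable def hcF (β a b : ℕ) : Finset (Finset ℕ) :=
  (Finset.Icc a b).powerset.filter (fun S => hcIndep β S)

lemma Zseg_eq (β : ℕ) (ν : ℕ → ℝ) (a b : ℕ) :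
    Zseg β ν a b = ∑ S ∈ hcF β a b, ∏ i ∈ S, ν i := by
  unfold Zseg hcF hcIndep
  congr 1
  exact Finset.filter_congr_decidable ..

lemma mem_hcF {β a b : ℕ} {S : Finset ℕ} :
    S ∈ hcF β a b ↔ S ⊆ Finset.Icc a b ∧ hcIndep β S := by
  simp [hcF, Finset.mem_filter, Finset.mem_powerset]

lemma stmt6_card_aux (β : ℕ) (S : Finset ℕ)
    (h : ∀ i ∈ S, ∀ j ∈ S, i ≠ j → ¬(i ≤ j + β ∧ j ≤ i + β)) :
    (S ∩ Finset.Icc 1 (β + 1)).card ≤ 1 := by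
  apply Finset.card_le_one.2
  intro a ha b hb
  simp only [Finset.mem_inter, Finset.mem_Icc] at ha hb
  by_contra hne
  exact h a ha.1 b hb.1 hne ⟨by omega, by omega⟩

lemma stmt6_inter_cases (β : ℕ) (S : Finset ℕ)
    (h : ∀ i ∈ S, ∀ j ∈ S, i ≠ j → ¬(i ≤ j + β ∧ j ≤ i + β)) :
    S ∩ Finset.Icc 1 (β + 1) = ∅ ∨
      ∃ a, 1 ≤ a ∧ a ≤ β + 1 ∧ S ∩ Finset.Icc 1 (β + 1) = {a} := by
  rcases Finset.eq_empty_or_nonempty (S ∩ Finset.Icc 1 (β + 1)) with he | hne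
  · exact Or.inl he
  · right
    have hc : (S ∩ Finset.Icc 1 (β + 1)).card = 1 :=
      le_antisymm (stmt6_card_aux β S h) (Finset.card_pos.2 hne)
    obtain ⟨a, ha⟩ := Finset.card_eq_one.1 hc
    have haS : a ∈ S ∩ Finset.Icc 1 (β + 1) := by rw [ha]; exact Finset.mem_singleton_self a
    simp only [Finset.mem_inter, Finset.mem_Icc] at haS
    exact ⟨a, haS.2.1, haS.2.2, ha⟩

/-- in any feasible state at most one of the first β+1 nodes is active,
and the normalizing constant decomposes as
`Z_{1:n} = Z_{β+2:n} + ∑_{i=1}^{β+1} ν_i Z_{i+β+1:n}`. -/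
theorem stmt6 (n β : ℕ) (hβn : β < n) (ν : ℕ → ℝ) (hν : ∀ i, 0 < ν i) :
    (∀ S ∈ (Finset.Icc 1 n).powerset.filter
        (fun S => ∀ i ∈ S, ∀ j ∈ S, i ≠ j → ¬(i ≤ j + β ∧ j ≤ i + β)),
      (S ∩ Finset.Icc 1 (β + 1)).card ≤ 1) ∧
    Zseg β ν 1 n =
      Zseg β ν (β + 2) n + ∑ i ∈ Finset.Icc 1 (β + 1), ν i * Zseg β ν (i + β + 1) n := by
  classical
  constructor
  · intro S hS
    simp only [Finset.mem_filter, Finset.mem_powerset] at hS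
    exact stmt6_card_aux β S hS.2
  · set key : Finset ℕ → ℕ := fun S => ∑ j ∈ S ∩ Finset.Icc 1 (β + 1), j with hkeydef
    set F : ℕ → ℕ → Finset (Finset ℕ) := fun a b => hcF β a b with hF
    -- key of any independent S ⊆ Icc 1 n lies in range (β+2)
    have hmaps : ∀ S ∈ F 1 n, key S ∈ Finset.range (β + 2) := by
      intro S hS
      rw [hF, mem_hcF] at hS
      rcases stmt6_inter_cases β S hS.2 with he | ⟨a, ha1, ha2, hea⟩
      · simp [hkeydef, he]
      · simp only [hkeydef, hea, Finset.sum_singleton, Finset.mem_range]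
        omega
    have hfib : Zseg β ν 1 n =
        ∑ k ∈ Finset.range (β + 2),
          ∑ S ∈ (F 1 n).filter (fun S => key S = k), ∏ i ∈ S, ν i := by
      rw [Finset.sum_fiberwise_of_maps_to hmaps, hF, Zseg_eq]
    have hrange : Finset.range (β + 2) = insert 0 (Finset.Icc 1 (β + 1)) := by
      ext x
      simp only [Finset.mem_range, Finset.mem_insert, Finset.mem_Icc]
      omega
    rw [hfib, hrange, Finset.sum_insert (by simp)]
    congr 1
    · -- fiber 0 equals Z_{β+2:n}
      have hset : (F 1 n).filter (fun S => key S = 0) = F (β + 2) n := by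
        ext S
        simp only [hF, Finset.mem_filter, mem_hcF]
        constructor
        · rintro ⟨⟨hsub, hind⟩, hk0⟩
          refine ⟨fun x hx => ?_, hind⟩
          have hx1 := hsub hx
          simp only [Finset.mem_Icc] at hx1 ⊢
          by_contra hc
          have hxmem : x ∈ S ∩ Finset.Icc 1 (β + 1) := by
            simp only [Finset.mem_inter, Finset.mem_Icc]
            exact ⟨hx, hx1.1, by omega⟩
          have hle : x ≤ key S := by
            simpa [hkeydef] using Finset.single_le_sum (f := fun j => j)
              (fun i _ => Nat.zero_le i) hxmem
          omega
        · rintro ⟨hsub, hind⟩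
          have hsub' : S ⊆ Finset.Icc 1 n := by
            intro x hx
            have := hsub hx
            simp only [Finset.mem_Icc] at this ⊢
            omega
          have hint : S ∩ Finset.Icc 1 (β + 1) = ∅ := by
            ext x
            simp only [Finset.mem_inter, Finset.mem_Icc, Finset.notMem_empty,
              iff_false, not_and]
            intro hx
            have := hsub hx
            simp only [Finset.mem_Icc] at this
            omega
          refine ⟨⟨hsub', hind⟩, ?_⟩
          simp [hkeydef, hint]
      rw [hset, hF, Zseg_eq]
    · -- fibers i = 1, …, β+1
      apply Finset.sum_congr rfl
      intro i hi
      simp only [Finset.mem_Icc] at hi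
      rw [hF, Zseg_eq, Finset.mul_sum]
      -- membership characterization of the fiber
      have hfibchar : ∀ S ∈ (F 1 n).filter (fun S => key S = i),
          S ∩ Finset.Icc 1 (β + 1) = {i} := by
        intro S hS
        simp only [hF, Finset.mem_filter, mem_hcF] at hS
        rcases stmt6_inter_cases β S hS.1.2 with he | ⟨a, ha1, ha2, hea⟩
        · exfalso
          have : key S = 0 := by simp [hkeydef, he]
          omega
        · have : key S = a := by simp [hkeydef, hea]
          have hai : a = i := by omega
          rw [hea, hai]
      apply Finset.sum_nbij' (fun S => S.erase i) (fun T => insert i T)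
      · -- erase maps fiber to F (i+β+1) n
        intro S hS
        have hinter := hfibchar S hS
        simp only [hF, Finset.mem_filter, mem_hcF] at hS ⊢
        obtain ⟨⟨hsub, hind⟩, hkS⟩ := hS
        have hiS : i ∈ S := by
          have : i ∈ S ∩ Finset.Icc 1 (β + 1) := by rw [hinter]; simp
          exact (Finset.mem_inter.1 this).1
        constructor
        · intro x hx
          have hxS := Finset.mem_of_mem_erase hx
          have hxi : x ≠ i := Finset.ne_of_mem_erase hx
          have hx1 := hsub hxS
          simp only [Finset.mem_Icc] at hx1 ⊢
          have hxbig : β + 2 ≤ x := by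
            by_contra hc
            have : x ∈ S ∩ Finset.Icc 1 (β + 1) := by
              simp only [Finset.mem_inter, Finset.mem_Icc]
              exact ⟨hxS, hx1.1, by omega⟩
            rw [hinter, Finset.mem_singleton] at this
            exact hxi this
          have hno := hind x hxS i hiS hxi
          constructor
          · omega
          · exact hx1.2
        · intro a ha b hb hab
          exact hind a (Finset.mem_of_mem_erase ha) b (Finset.mem_of_mem_erase hb) hab
      · -- insert maps F (i+β+1) n to the fiber
        intro T hT
        simp only [hF, Finset.mem_filter, mem_hcF] at hT ⊢
        obtain ⟨hsub, hind⟩ := hT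
        have hTbig : ∀ x ∈ T, i + β + 1 ≤ x ∧ x ≤ n := by
          intro x hx
          have := hsub hx
          simpa [Finset.mem_Icc] using this
        have hiT : i ∉ T := by
          intro hc
          have := hTbig i hc
          omega
        refine ⟨⟨?_, ?_⟩, ?_⟩
        · intro x hx
          rcases Finset.mem_insert.1 hx with rfl | hxT
          · simp only [Finset.mem_Icc]; omega
          · have := hTbig x hxT
            simp only [Finset.mem_Icc]; omega
        · intro a ha b hb hab
          rcases Finset.mem_insert.1 ha with rfl | haT <;>
            rcases Finset.mem_insert.1 hb with rfl | hbT
          · exact absurd rfl hab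
          · have := hTbig b hbT
            intro hc; omega
          · have := hTbig a haT
            intro hc; omega
          · exact hind a haT b hbT hab
        · have hins : (insert i T) ∩ Finset.Icc 1 (β + 1) = {i} := by
            ext x
            simp only [Finset.mem_inter, Finset.mem_insert, Finset.mem_Icc,
              Finset.mem_singleton]
            constructor
            · rintro ⟨rfl | hxT, hx2⟩
              · rfl
              · have := hTbig x hxT; omega
            · rintro rfl
              exact ⟨Or.inl rfl, by omega, by omega⟩
          simp [hkeydef, hins]
      · intro S hS
        have hinter := hfibchar S hS
        have hiS : i ∈ S := by
          have : i ∈ S ∩ Finset.Icc 1 (β + 1) := by rw [hinter]; simp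
          exact (Finset.mem_inter.1 this).1
        exact Finset.insert_erase hiS
      · intro T hT
        rw [mem_hcF] at hT
        have hiT : i ∉ T := by
          intro hc
          have := hT.1 hc
          simp only [Finset.mem_Icc] at this
          omega
        exact Finset.erase_insert hiT
      · intro S hS
        have hinter := hfibchar S hS
        have hiS : i ∈ S := by
          have : i ∈ S ∩ Finset.Icc 1 (β + 1) := by rw [hinter]; simp
          exact (Finset.mem_inter.1 this).1
        exact (Finset.mul_prod_erase S ν hiS).symm
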